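/- (ISS of a single-layer GGNN) Let x(t+1) = tanh(q̂(t) ∘ (Ax(t)) + q̃(t) ∘ (Bu(t)) + b) with ‖q̂(t)‖_∞ ≤ σ_q̂, ‖q̃(t)‖_∞ ≤ σ_q̃ ≤ 1 for all t, and suppose 𝒜 := σ_q̂‖A‖_∞ < 1 and ‖x(0)‖_∞ ≤ 1, ‖u(t)‖_∞ ≤ ū for all t. Then for all t, ‖x(t)‖_∞ ≤ 𝒜^t‖x(0)‖_∞ + (1-𝒜)^{-1}(σ_q̃‖B‖_∞ ū + ‖b‖_∞). -/

import Mathlib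

attribute [local instance] Matrix.linftyOpNormedAddCommGroup

/-!
Since `tanh` is 1-Lipschitz and vanishes at 0, applying it componentwise does not increase the
sup norm; the Hadamard product is the product of the normed ring `ι → ℝ`, so its sup norm is
submultiplicative. Together with `‖A v‖ ≤ ‖A‖ ‖v‖` this gives the affine one-step bound
`‖x (t+1)‖ ≤ 𝒜 ‖x t‖ + (σ_q̃ ‖B‖ ū + ‖b‖)`, and unrolling it with `0 ≤ 𝒜 < 1` yields the
geometric estimate.
-/

namespace Real

theorem hasDerivAt_tanh (x : ℝ) : HasDerivAt tanh (1 / cosh x ^ 2) x := by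
  have h := (hasDerivAt_sinh x).div (hasDerivAt_cosh x) (cosh_pos x).ne'
  rw [← sq, ← sq, cosh_sq_sub_sinh_sq] at h
  rwa [show tanh = sinh / cosh from funext tanh_eq_sinh_div_cosh]

theorem lipschitzWith_tanh : LipschitzWith 1 tanh :=
  lipschitzWith_of_nnnorm_deriv_le (fun x => (hasDerivAt_tanh x).differentiableAt) fun x => by
    rw [(hasDerivAt_tanh x).deriv, ← NNReal.coe_le_coe, coe_nnnorm, NNReal.coe_one, norm_div,
      norm_one, norm_pow, norm_of_nonneg (cosh_pos x).le]
    exact div_le_one_of_le₀ (one_le_pow₀ (one_le_cosh x)) (by positivity)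

theorem abs_tanh_le_abs (x : ℝ) : |tanh x| ≤ |x| := by
  simpa using lipschitzWith_tanh.dist_le_mul x 0

end Real

theorem norm_tanh_comp_le {ι : Type*} [Fintype ι] (v : ι → ℝ) :
    ‖fun i => Real.tanh (v i)‖ ≤ ‖v‖ :=
  (pi_norm_le_iff_of_nonneg (norm_nonneg v)).2 fun i =>
    (Real.abs_tanh_le_abs (v i)).trans (norm_le_pi_norm v i)

theorem le_pow_mul_add_of_le_mul_add {𝕜 : Type*} [Field 𝕜] [LinearOrder 𝕜]
    [IsStrictOrderedRing 𝕜]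
    {a : ℕ → 𝕜} {k c : 𝕜} (hk₀ : 0 ≤ k) (hk₁ : k < 1) (hc : 0 ≤ c)
    (h : ∀ t, a (t + 1) ≤ k * a t + c) (t : ℕ) :
    a t ≤ k ^ t * a 0 + (1 - k)⁻¹ * c := by
  have hk : 1 - k ≠ 0 := (sub_pos.2 hk₁).ne'
  induction t with
  | zero => simpa using mul_nonneg (inv_nonneg.2 (sub_pos.2 hk₁).le) hc
  | succ t ih =>
    calc a (t + 1) ≤ k * (k ^ t * a 0 + (1 - k)⁻¹ * c) + c := (h t).trans (by gcongr)
      _ = k ^ (t + 1) * a 0 + (1 - k)⁻¹ * c := by field_simp; ring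

section GGNN

open Matrix

variable {ι κ : Type*} [Fintype ι] [Fintype κ]

noncomputable def ggnnStep (A : Matrix ι ι ℝ) (B : Matrix ι κ ℝ) (b q r x : ι → ℝ) (u : κ → ℝ) :
    ι → ℝ :=
  fun i => Real.tanh ((q * (A *ᵥ x) + r * (B *ᵥ u) + b) i)

theorem norm_ggnnStep_le (A : Matrix ι ι ℝ) (B : Matrix ι κ ℝ) (b q r x : ι → ℝ) (u : κ → ℝ) :
    ‖ggnnStep A B b q r x u‖ ≤ ‖q‖ * ‖A‖ * ‖x‖ + ‖r‖ * ‖B‖ * ‖u‖ + ‖b‖ :=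
  calc ‖ggnnStep A B b q r x u‖ ≤ ‖q * (A *ᵥ x) + r * (B *ᵥ u) + b‖ := norm_tanh_comp_le _
    _ ≤ ‖q * (A *ᵥ x)‖ + ‖r * (B *ᵥ u)‖ + ‖b‖ := norm_add₃_le
    _ ≤ ‖q‖ * (‖A‖ * ‖x‖) + ‖r‖ * (‖B‖ * ‖u‖) + ‖b‖ := by
      gcongr <;> refine (norm_mul_le _ _).trans ?_ <;> gcongr <;> exact linfty_opNorm_mulVec _ _
    _ = ‖q‖ * ‖A‖ * ‖x‖ + ‖r‖ * ‖B‖ * ‖u‖ + ‖b‖ := by ring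

end GGNN

theorem ggnn_ISS_general {n m : ℕ}
    (A : Matrix (Fin n) (Fin n) ℝ) (B : Matrix (Fin n) (Fin m) ℝ) (b : Fin n → ℝ)
    (x : ℕ → Fin n → ℝ) (u : ℕ → Fin m → ℝ)
    (qhat qtil : ℕ → Fin n → ℝ) (σqhat σqtil ubar : ℝ)
    (hqhat : ∀ t, ‖qhat t‖ ≤ σqhat) (hqtil : ∀ t, ‖qtil t‖ ≤ σqtil)
    (hrec : ∀ t, x (t + 1) =
      fun i => Real.tanh (qhat t i * A.mulVec (x t) i + qtil t i * B.mulVec (u t) i + b i))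
    (hA : σqhat * ‖A‖ < 1)
    (hu : ∀ t, ‖u t‖ ≤ ubar) :
    ∀ t, ‖x t‖ ≤ (σqhat * ‖A‖) ^ t * ‖x 0‖ +
      (1 - σqhat * ‖A‖)⁻¹ * (σqtil * ‖B‖ * ubar + ‖b‖) := by
  have hσqhat : 0 ≤ σqhat := (norm_nonneg _).trans (hqhat 0)
  have hσqtil : 0 ≤ σqtil := (norm_nonneg _).trans (hqtil 0)
  have hubar : 0 ≤ ubar := (norm_nonneg _).trans (hu 0)
  refine le_pow_mul_add_of_le_mul_add (by positivity) hA (by positivity) fun t => ?_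
  have hstep : x (t + 1) = ggnnStep A B b (qhat t) (qtil t) (x t) (u t) := hrec t
  calc ‖x (t + 1)‖ ≤ ‖qhat t‖ * ‖A‖ * ‖x t‖ + ‖qtil t‖ * ‖B‖ * ‖u t‖ + ‖b‖ :=
        hstep ▸ norm_ggnnStep_le _ _ _ _ _ _ _
    _ ≤ σqhat * ‖A‖ * ‖x t‖ + (σqtil * ‖B‖ * ubar + ‖b‖) := by
      rw [← add_assoc]
      gcongr
      exacts [hqhat t, hqtil t, hu t]

theorem ggnn_ISS {n m : ℕ}
    (A : Matrix (Fin n) (Fin n) ℝ) (B : Matrix (Fin n) (Fin m) ℝ) (b : Fin n → ℝ)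
    (x : ℕ → Fin n → ℝ) (u : ℕ → Fin m → ℝ)
    (qhat qtil : ℕ → Fin n → ℝ) (σqhat σqtil ubar : ℝ)
    (hqhat₀ : ∀ t i, qhat t i ∈ Set.Icc (0 : ℝ) 1)
    (hqtil₀ : ∀ t i, qtil t i ∈ Set.Icc (0 : ℝ) 1)
    (hqhat : ∀ t, ‖qhat t‖ ≤ σqhat) (hqtil : ∀ t, ‖qtil t‖ ≤ σqtil)
    (hσqtil : σqtil ≤ 1)
    (hrec : ∀ t, x (t + 1) =
      fun i => Real.tanh (qhat t i * A.mulVec (x t) i + qtil t i * B.mulVec (u t) i + b i))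
    (hA : σqhat * ‖A‖ < 1)
    (hx0 : ‖x 0‖ ≤ 1) (hu : ∀ t, ‖u t‖ ≤ ubar) :
    ∀ t, ‖x t‖ ≤ (σqhat * ‖A‖) ^ t * ‖x 0‖ +
      (1 - σqhat * ‖A‖)⁻¹ * (σqtil * ‖B‖ * ubar + ‖b‖) :=
  ggnn_ISS_general A B b x u qhat qtil σqhat σqtil ubar hqhat hqtil hrec hA hu
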